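/- arXiv:2003.03647 — 2 statements merged into one kernel-verified Lean document; each statement's English description precedes it below -/
import Mathlib

section
/- Let X be a real random variable, b > 0, and h > 0. Then E[e^{hX} · 1_{|X| ≤ b}] ≤ exp( h·E[X · 1_{|X| ≤ b}] + ((e^{hb} - 1 - hb)/b²) · E[X² · 1_{|X| ≤ b}] ). -/
/-!
On `{|X| ≤ b}` the exponent `u = hX` satisfies `|u| ≤ t := hb`, and comparing the exponential
series term by term (`u ^ (n + 2) ≤ u ^ 2 t ^ n`) gives `e^u ≤ 1 + u + u² (e^t - 1 - t) / t²`.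
Integrating over `{|X| ≤ b}`, whose measure is at most `1`, and using `1 + v ≤ e^v` finishes.
-/

open MeasureTheory
open scoped Nat

namespace Real

theorem hasSum_pow_div_factorial_add_two (x : ℝ) :
    HasSum (fun n : ℕ => x ^ (n + 2) / (n + 2)!) (exp x - 1 - x) := by
  have hexp := NormedSpace.expSeries_div_hasSum_exp x
  rw [← exp_eq_exp_ℝ, ← hasSum_nat_add_iff' 2] at hexp
  simpa [Finset.sum_range_succ, sub_sub] using hexp

theorem exp_le_one_add_add_sq_mul_of_abs_le {u t : ℝ} (ht : 0 < t) (hu : |u| ≤ t) :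
    exp u ≤ 1 + u + u ^ 2 / t ^ 2 * (exp t - 1 - t) := by
  have hterm (n : ℕ) : u ^ (n + 2) / (n + 2)! ≤ u ^ 2 / t ^ 2 * (t ^ (n + 2) / (n + 2)!) := by
    have hpow : u ^ (n + 2) ≤ u ^ 2 * t ^ n :=
      calc u ^ (n + 2) = u ^ 2 * u ^ n := by ring
        _ ≤ u ^ 2 * |u| ^ n := by rw [← abs_pow]; gcongr; exact le_abs_self _
        _ ≤ u ^ 2 * t ^ n := by gcongr
    calc u ^ (n + 2) / (n + 2)! ≤ u ^ 2 * t ^ n / (n + 2)! := by gcongr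
      _ = u ^ 2 / t ^ 2 * (t ^ (n + 2) / (n + 2)!) := by field_simp; ring
  have := hasSum_le hterm (hasSum_pow_div_factorial_add_two u)
    ((hasSum_pow_div_factorial_add_two t).mul_left _)
  linarith

end Real

theorem MeasureTheory.integrableOn_comp_of_abs_le {Ω : Type*} [MeasurableSpace Ω]
    {μ : Measure Ω} [IsFiniteMeasure μ] {X : Ω → ℝ} (hX : Measurable X) {g : ℝ → ℝ}
    (hg : Continuous g) (b : ℝ) : IntegrableOn (fun ω => g (X ω)) {ω | |X ω| ≤ b} μ := by
  obtain ⟨M, hM⟩ := (isCompact_Icc (a := -b) (b := b)).exists_bound_of_continuousOn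
    hg.continuousOn
  refine Measure.integrableOn_of_bounded (M := M) (measure_ne_top _ _)
    (hg.measurable.comp hX).aestronglyMeasurable ?_
  rw [ae_restrict_iff' (measurableSet_le hX.abs measurable_const)]
  exact ae_of_all _ fun ω hω => hM _ (abs_le.mp hω)

theorem fuk_nagaev_exponential_bound_general {Ω : Type*} [MeasurableSpace Ω] (μ : Measure Ω)
    [IsProbabilityMeasure μ] (X : Ω → ℝ) (hXm : Measurable X) (b h : ℝ)
    (hb : 0 < b) (hh : 0 < h) :
    (∫ ω in {ω | |X ω| ≤ b}, Real.exp (h * X ω) ∂μ) ≤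
      Real.exp (h * (∫ ω in {ω | |X ω| ≤ b}, X ω ∂μ) +
        (Real.exp (h * b) - 1 - h * b) / b ^ 2 *
          ∫ ω in {ω | |X ω| ≤ b}, X ω ^ 2 ∂μ) := by
  set A := {ω | |X ω| ≤ b}
  set c := (Real.exp (h * b) - 1 - h * b) / b ^ 2 with hc
  have hint (g : ℝ → ℝ) (hg : Continuous g) : IntegrableOn (fun ω => g (X ω)) A μ :=
    integrableOn_comp_of_abs_le hXm hg b
  have hX : IntegrableOn X A μ := hint id continuous_id
  have hX2 : IntegrableOn (fun ω => X ω ^ 2) A μ := hint (· ^ 2) (by fun_prop)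
  have hpointwise : ∀ ω ∈ A, Real.exp (h * X ω) ≤ 1 + h * X ω + c * X ω ^ 2 := by
    intro ω hω
    have hu : |h * X ω| ≤ h * b := by rw [abs_mul, abs_of_pos hh]; gcongr; exact hω
    convert Real.exp_le_one_add_add_sq_mul_of_abs_le (mul_pos hh hb) hu using 2
    rw [hc]
    field_simp
  calc ∫ ω in A, Real.exp (h * X ω) ∂μ
      ≤ ∫ ω in A, (1 + h * X ω + c * X ω ^ 2) ∂μ :=
        setIntegral_mono_on (hint (fun x => Real.exp (h * x)) (by fun_prop))
          (hint (fun x => 1 + h * x + c * x ^ 2) (by fun_prop))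
          (measurableSet_le hXm.abs measurable_const) hpointwise
    _ = μ.real A + (h * ∫ ω in A, X ω ∂μ + c * ∫ ω in A, X ω ^ 2 ∂μ) := by
        rw [integral_add (hint (fun x => 1 + h * x) (by fun_prop)) (hX2.const_mul c),
          integral_add (integrable_const 1) (hX.const_mul h), integral_const_mul,
          integral_const_mul]
        simp [add_assoc]
    _ ≤ 1 + (h * ∫ ω in A, X ω ∂μ + c * ∫ ω in A, X ω ^ 2 ∂μ) := by
        gcongr; exact measureReal_le_one
    _ ≤ _ := by rw [add_comm]; exact Real.add_one_le_exp _

/-- Fuk–Nagaev exponential moment bound: for a real random variable `X`, `b > 0`, `h > 0`,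
`E[e^{hX} ; |X| ≤ b] ≤ exp (h E[X ; |X| ≤ b] + ((e^{hb} - 1 - hb)/b²) E[X² ; |X| ≤ b])`. -/
theorem fuk_nagaev_exponential_bound {Ω : Type*} [MeasurableSpace Ω] (μ : Measure Ω)
    [IsProbabilityMeasure μ] (X : Ω → ℝ) (hXm : Measurable X) (b h : ℝ)
    (hb : 0 < b) (hh : 0 < h)
    (hint1 : IntegrableOn X {ω | |X ω| ≤ b} μ)
    (hint2 : IntegrableOn (fun ω => X ω ^ 2) {ω | |X ω| ≤ b} μ) :
    (∫ ω in {ω | |X ω| ≤ b}, Real.exp (h * X ω) ∂μ) ≤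
      Real.exp (h * (∫ ω in {ω | |X ω| ≤ b}, X ω ∂μ) +
        (Real.exp (h * b) - 1 - h * b) / b ^ 2 *
          ∫ ω in {ω | |X ω| ≤ b}, X ω ^ 2 ∂μ) :=
  fuk_nagaev_exponential_bound_general μ X hXm b h hb hh
end

section
/- Let d ≥ 1 and a > 0. Then lim_{T → ∞} ∑_{n ≥ a·T} T^{d/2} · n^{-1 - d/2} · exp(-T/(2n)) = ∫_a^∞ v^{-1 - d/2} · exp(-1/(2v)) dv, where the sum is over integers n ≥ a·T. -/
/-!
With `g v = v ^ (-1 - d/2) * exp (-1 / (2 v))`, the `n`-th term is `T⁻¹ * g (n / T)`, so the sum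
is a Riemann sum of mesh `1 / T` for `1_{[a, ∞)} g`. It is the integral over `(0, ∞)` of the step
function `v ↦ 1_{[a, ∞)} g (⌈v T⌉ / T)`. Since `⌈v T⌉ / T` tends to `v` from the right, the step
functions converge pointwise to `1_{[a, ∞)} g`, which is right-continuous; since moreover
`⌈v T⌉ / T ≥ v` and `v ↦ v ^ (-1 - d/2)` is decreasing, they are dominated by the integrable
function `1_{(a/2, ∞)} v ^ (-1 - d/2)` once `T ≥ 2 / a`. Dominated convergence concludes.
-/

open MeasureTheory Filter Set Topology

theorem setOf_natCeil_mul_eq_succ (T : ℝ) (n : ℕ) :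
    {v : ℝ | ⌈v * T⌉₊ = n + 1} = (· * T) ⁻¹' Ioc (n : ℝ) (n + 1) := by
  ext v
  simp [Nat.ceil_eq_iff n.succ_ne_zero]

theorem tendsto_natCeil_mul_div_nhdsWithin_Ici {v : ℝ} (hv : 0 ≤ v) :
    Tendsto (fun T : ℝ => (⌈v * T⌉₊ : ℝ) / T) atTop (𝓝[≥] v) := by
  refine tendsto_nhdsWithin_iff.mpr ⟨tendsto_nat_ceil_mul_div_atTop hv, ?_⟩
  filter_upwards [eventually_gt_atTop 0] with T hT
  exact (le_div_iff₀ hT).mpr (Nat.le_ceil _)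

section RiemannSum

variable {E : Type*} [NormedAddCommGroup E] {F : ℝ → E} {h : ℝ → ℝ} {a c : ℝ}

theorem continuousWithinAt_Ici_indicator_Ici {g : ℝ → E} (hg : ContinuousOn g (Ici a)) (v : ℝ) :
    ContinuousWithinAt ((Ici a).indicator g) (Ici v) v := by
  rcases lt_or_ge v a with hva | hav
  · refine (continuousAt_const (y := (0 : E))).continuousWithinAt.congr_of_eventuallyEq ?_
      (indicator_of_notMem (not_le.mpr hva) g)
    filter_upwards [nhdsWithin_le_nhds (Iio_mem_nhds hva)] with w hw
    exact indicator_of_notMem (not_le.mpr hw) g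
  · exact ((hg v hav).mono (Ici_subset_Ici.mpr hav)).congr
      (fun w hw => indicator_of_mem (hav.trans hw) g) (indicator_of_mem hav g)

theorem norm_comp_natCeil_mul_div_le (hF : ∀ u < a, F u = 0)
    (hFh : ∀ u, a ≤ u → ‖F u‖ ≤ h u) (hh : AntitoneOn h (Ioi c)) {T v : ℝ} (hT : 0 < T)
    (hTc : 1 ≤ (a - c) * T) (hv : 0 ≤ v) :
    ‖F (⌈v * T⌉₊ / T)‖ ≤ (Ioi c).indicator h v := by
  set u : ℝ := ⌈v * T⌉₊ / T
  have hvu : v ≤ u := (le_div_iff₀ hT).mpr (Nat.le_ceil _)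
  by_cases hau : a ≤ u
  · have hcv : c < v := by
      have hu : u < v + T⁻¹ := by
        rw [div_lt_iff₀ hT, add_mul, inv_mul_cancel₀ hT.ne']
        exact Nat.ceil_lt_add_one (by positivity)
      have hTinv : T⁻¹ ≤ a - c := by
        rw [inv_le_iff_one_le_mul₀ hT]; linarith
      linarith
    rw [indicator_of_mem (show v ∈ Ioi c from hcv)]
    exact (hFh u hau).trans (hh hcv (hcv.trans_le hvu) hvu)
  · rw [hF u (not_le.mp hau), norm_zero]
    by_cases hcv : c < v
    · rw [indicator_of_mem (show v ∈ Ioi c from hcv)]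
      calc 0 ≤ ‖F (max v a)‖ := norm_nonneg _
        _ ≤ h (max v a) := hFh _ (le_max_right v a)
        _ ≤ h v := hh hcv (hcv.trans_le (le_max_left v a)) (le_max_left v a)
    · rw [indicator_of_notMem (show v ∉ Ioi c from hcv)]

variable [NormedSpace ℝ E] [CompleteSpace E]

theorem hasSum_integral_comp_natCeil_mul {f : ℕ → E} {T : ℝ} (hT : 0 < T)
    (hf : IntegrableOn (fun v => f ⌈v * T⌉₊) (Ioi 0)) :
    HasSum (fun n : ℕ => T⁻¹ • f (n + 1)) (∫ v in Ioi 0, f ⌈v * T⌉₊) := by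
  set s : ℕ → Set ℝ := fun n => {v : ℝ | ⌈v * T⌉₊ = n + 1}
  have hunion : ⋃ n, s n = Ioi 0 := by
    ext v
    simp [s, Nat.exists_eq_add_one, Nat.ceil_pos, mul_pos_iff_of_pos_right hT]
  have hdisj : Pairwise (Function.onFun Disjoint s) := fun i j hij =>
    Set.disjoint_left.mpr fun v hi hj => hij (Nat.succ_injective (hi.symm.trans hj))
  have hmeas : ∀ n, MeasurableSet (s n) := fun n =>
    (measurable_id.mul_const T).nat_ceil (measurableSet_singleton _)
  have hpiece : ∀ n : ℕ, ∫ v in s n, f ⌈v * T⌉₊ = T⁻¹ • f (n + 1) := by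
    intro n
    rw [setIntegral_congr_fun (hmeas n) (fun v (hv : _ = _) => by rw [hv]), setIntegral_const,
      measureReal_def, show s n = _ from setOf_natCeil_mul_eq_succ T n,
      Real.volume_preimage_mul_right hT.ne']
    simp [abs_of_pos hT, ENNReal.toReal_ofReal (inv_nonneg.mpr hT.le)]
  have hsum := hasSum_integral_iUnion hmeas hdisj (hunion ▸ hf)
  rwa [hunion, funext hpiece] at hsum

theorem tendsto_tsum_smul_comp_div_integral (ha : 0 < a) (hca : c < a)
    (hF : ∀ u < a, F u = 0) (hFh : ∀ u, a ≤ u → ‖F u‖ ≤ h u) (hh : AntitoneOn h (Ioi c))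
    (hhi : IntegrableOn h (Ioi c)) (hFr : ∀ v, 0 < v → ContinuousWithinAt F (Ici v) v) :
    Tendsto (fun T : ℝ => ∑' n : ℕ, T⁻¹ • F (n / T)) atTop (𝓝 (∫ v, F v)) := by
  have hFint : ∫ v in Ioi 0, F v = ∫ v, F v :=
    setIntegral_eq_integral_of_forall_compl_eq_zero fun v hv => hF v ((not_lt.mp hv).trans_lt ha)
  have hbound : ∀ᶠ T in atTop, 0 < T ∧ ∀ v ∈ Ioi (0 : ℝ),
      ‖F (⌈v * T⌉₊ / T)‖ ≤ (Ioi c).indicator h v := by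
    filter_upwards [eventually_ge_atTop (a - c)⁻¹, eventually_gt_atTop 0] with T hTc hT
    refine ⟨hT, fun v hv => norm_comp_natCeil_mul_div_le hF hFh hh hT ?_ (le_of_lt hv)⟩
    rwa [← inv_mul_le_iff₀ (sub_pos.mpr hca), mul_one]
  have hmeas : ∀ T : ℝ, AEStronglyMeasurable (fun v : ℝ => F (⌈v * T⌉₊ / T))
      (volume.restrict (Ioi 0)) := fun T =>
    (StronglyMeasurable.of_discrete (f := fun n : ℕ => F (n / T))).comp_measurable
      (measurable_id.mul_const T).nat_ceil |>.aestronglyMeasurable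
  have hbound_int : Integrable ((Ioi c).indicator h) (volume.restrict (Ioi 0)) :=
    (hhi.integrable_indicator measurableSet_Ioi).restrict
  have hsum : ∀ᶠ T in atTop,
      HasSum (fun n : ℕ => T⁻¹ • F (n / T)) (∫ v in Ioi 0, F (⌈v * T⌉₊ / T)) := by
    filter_upwards [hbound] with T ⟨hT, hT_bound⟩
    have hint : IntegrableOn (fun v : ℝ => F (⌈v * T⌉₊ / T)) (Ioi 0) :=
      hbound_int.mono' (hmeas T) ((ae_restrict_iff' measurableSet_Ioi).mpr
        (Eventually.of_forall hT_bound))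
    refine (hasSum_nat_add_iff' 1).mp ?_
    simpa [hF 0 ha] using hasSum_integral_comp_natCeil_mul (f := fun n => F (n / T)) hT hint
  rw [← hFint]
  refine Tendsto.congr' (hsum.mono fun T hT => hT.tsum_eq.symm) ?_
  refine tendsto_integral_filter_of_dominated_convergence _ (Eventually.of_forall hmeas) ?_
    hbound_int ?_
  · filter_upwards [hbound] with T ⟨_, hT_bound⟩
    exact (ae_restrict_iff' measurableSet_Ioi).mpr (Eventually.of_forall hT_bound)
  · refine (ae_restrict_iff' measurableSet_Ioi).mpr (Eventually.of_forall fun v hv => ?_)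
    exact (hFr v hv).tendsto.comp (tendsto_natCeil_mul_div_nhdsWithin_Ici (le_of_lt hv))

end RiemannSum

theorem rpow_mul_rpow_mul_exp_div_eq {s T x : ℝ} (hT : 0 < T) (hx : 0 < x) :
    T ^ s * x ^ (-1 - s) * Real.exp (-T / (2 * x))
      = T⁻¹ * ((x / T) ^ (-1 - s) * Real.exp (-1 / (2 * (x / T)))) := by
  rw [Real.div_rpow hx.le hT.le, Real.rpow_sub hT, Real.rpow_neg_one,
    show -1 / (2 * (x / T)) = -T / (2 * x) by field_simp]
  field_simp

theorem tendsto_tsum_rpow_mul_exp {s a : ℝ} (hs : 0 < s) (ha : 0 < a) :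
    Tendsto (fun T : ℝ => ∑' n : ℕ,
        if a * T ≤ n then T ^ s * (n : ℝ) ^ (-1 - s) * Real.exp (-T / (2 * n)) else 0)
      atTop (𝓝 (∫ v in Ioi a, v ^ (-1 - s) * Real.exp (-1 / (2 * v)))) := by
  set g : ℝ → ℝ := fun v => v ^ (-1 - s) * Real.exp (-1 / (2 * v))
  have hg : ContinuousOn g (Ici a) := by
    fun_prop (disch := intro x hx; have := ha.trans_le hx; positivity)
  have hgh : ∀ u, a ≤ u → ‖(Ici a).indicator g u‖ ≤ u ^ (-1 - s) := by
    intro u hau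
    have hu : 0 < u := ha.trans_le hau
    have hexp : Real.exp (-1 / (2 * u)) ≤ 1 := Real.exp_le_one_iff.mpr (by
      rw [neg_div]; exact neg_nonpos.mpr (by positivity))
    rw [indicator_of_mem (show u ∈ Ici a from hau), Real.norm_eq_abs, abs_of_nonneg (by positivity)]
    exact mul_le_of_le_one_right (by positivity) hexp
  have hlim := tendsto_tsum_smul_comp_div_integral (F := (Ici a).indicator g) ha (half_lt_self ha)
    (fun u hu => indicator_of_notMem (not_le.mpr hu) g) hgh
    ((Real.antitoneOn_rpow_Ioi_of_exponent_nonpos (by linarith)).mono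
      (Ioi_subset_Ioi (half_pos ha).le))
    (integrableOn_Ioi_rpow_of_lt (by linarith) (half_pos ha))
    (fun v _ => continuousWithinAt_Ici_indicator_Ici hg v)
  rw [integral_indicator measurableSet_Ici, integral_Ici_eq_integral_Ioi] at hlim
  refine hlim.congr' ?_
  filter_upwards [eventually_gt_atTop 0] with T hT
  congr 1 with n
  split_ifs with han
  · have hn : (0 : ℝ) < n := (mul_pos ha hT).trans_le han
    rw [smul_eq_mul, indicator_of_mem (show n / T ∈ Ici a from (le_div_iff₀ hT).mpr han),
      rpow_mul_rpow_mul_exp_div_eq hT hn]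
  · rw [indicator_of_notMem (show n / T ∉ Ici a from fun h => han ((le_div_iff₀ hT).mp h)),
      smul_zero]

/-- For `d ≥ 1` and `a > 0`,
`∑_{n ≥ aT} T^{d/2} n^{-1-d/2} exp (-T/(2n)) → ∫_a^∞ v^{-1-d/2} exp (-1/(2v)) dv`
as `T → ∞`, the sum ranging over integers `n ≥ aT`. -/
theorem riemann_sum_tail_limit (d : ℕ) (hd : 1 ≤ d) (a : ℝ) (ha : 0 < a) :
    Filter.Tendsto
      (fun T : ℝ => ∑' n : ℕ,
        if a * T ≤ (n : ℝ) then
          T ^ ((d : ℝ) / 2) * (n : ℝ) ^ (-1 - (d : ℝ) / 2) * Real.exp (-T / (2 * n))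
        else 0)
      Filter.atTop
      (nhds (∫ v in Set.Ioi a, v ^ (-1 - (d : ℝ) / 2) * Real.exp (-1 / (2 * v)))) := by
  exact tendsto_tsum_rpow_mul_exp (div_pos (Nat.cast_pos.mpr hd) two_pos) ha
end
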